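/- arXiv:1307.4274 — 2 statements merged into one kernel-verified Lean document; each statement's English description precedes it below -/
import Mathlib

section
/- Let X₁, …, Xₙ be independent random variables where Xᵢ is geometrically distributed on {1, 2, 3, …} with success probability pᵢ ∈ (0, 1], let X := X₁ + ⋯ + Xₙ, and let s be a finite real number with ∑_{i=1}^n 1/pᵢ² ≤ s. Then for every δ > 0 and every t ≥ 0, P(X < E[X] − δ) ≤ exp(−tδ + t²s/2). -/
/-!
Chernoff's bound for the lower tail. Each `Xᵢ` has the law of `1 + G` with `G` geometric on `ℕ`,
so `E[exp (-t Xᵢ)] = p / (eᵗ - 1 + p) ≤ 1 / (1 + t / p)`, and `log (1 + x) ≥ x - x² / 2` turns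
this into the sub-Gaussian bound `exp (-t / p + t² / (2 p²))`. Multiplying over the independent
`Xᵢ` gives the claim.
-/

open MeasureTheory ProbabilityTheory Real

theorem Real.sub_sq_div_two_le_log_one_add {x : ℝ} (hx : 0 ≤ x) : x - x ^ 2 / 2 ≤ log (1 + x) := by
  refine le_trans ?_ (le_log_one_add_of_nonneg hx)
  rw [le_div_iff₀ (by positivity)]
  nlinarith [pow_nonneg hx 3]

theorem Real.div_exp_sub_one_add_le {p t : ℝ} (hp : 0 < p) (ht : 0 ≤ t) :
    p / (exp t - 1 + p) ≤ exp (-t * (1 / p) + t ^ 2 * (1 / p ^ 2) / 2) := by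
  have hlog : exp (t / p - (t / p) ^ 2 / 2) ≤ 1 + t / p :=
    (le_log_iff_exp_le (by positivity)).mp (sub_sq_div_two_le_log_one_add (by positivity))
  calc p / (exp t - 1 + p) = ((exp t - 1 + p) / p)⁻¹ := (inv_div _ _).symm
    _ ≤ (1 + t / p)⁻¹ := by
        gcongr
        rw [le_div_iff₀ hp, add_mul, div_mul_cancel₀ _ hp.ne']
        linarith [add_one_le_exp t]
    _ ≤ (exp (t / p - (t / p) ^ 2 / 2))⁻¹ := by gcongr
    _ = exp (-t * (1 / p) + t ^ 2 * (1 / p ^ 2) / 2) := by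
        rw [← exp_neg]; congr 1; field_simp; ring

theorem MeasureTheory.Measure.le_of_forall_singleton_le {α : Type*} [MeasurableSpace α]
    [Countable α] [MeasurableSingletonClass α] {μ ν : Measure α} (h : ∀ a, μ {a} ≤ ν {a}) :
    μ ≤ ν := by
  rw [← μ.sum_smul_dirac, ← ν.sum_smul_dirac, Measure.le_iff]
  intro s hs
  simp only [Measure.sum_apply _ hs, Measure.smul_apply, smul_eq_mul]
  exact ENNReal.tsum_le_tsum fun a ↦ mul_le_mul_left (h a) _

namespace ProbabilityTheory

section Geometric

variable {p : unitInterval}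

theorem hasSum_succ_mul_geometricMeasure (hp : p ≠ 0) :
    HasSum (fun n : ℕ ↦ (1 - p : ℝ) ^ n * p * (n + 1)) (1 / p) := by
  have hp0 : (0 : ℝ) < p := unitInterval.pos_iff_ne_zero.mpr hp
  have hq : ‖(1 - p : ℝ)‖ < 1 := by
    rw [Real.norm_of_nonneg (by linarith [p.2.2])]; linarith
  have h := ((hasSum_coe_mul_geometric_of_norm_lt_one hq).add
    (hasSum_geometric_of_norm_lt_one hq)).mul_right (p : ℝ)
  rw [sub_sub_cancel, show ((1 - p) / p ^ 2 + (p : ℝ)⁻¹) * p = 1 / p by field_simp; ring] at h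
  exact h.congr_fun fun n ↦ by ring

theorem integrable_succ_geometricMeasure (hp : p ≠ 0) :
    Integrable (fun n : ℕ ↦ (n + 1 : ℝ)) (geometricMeasure p) := by
  rw [integrable_geometricMeasure_iff hp]
  refine (hasSum_succ_mul_geometricMeasure hp).summable.congr fun n ↦ ?_
  rw [Real.norm_of_nonneg (by positivity)]

theorem integral_succ_geometricMeasure (hp : p ≠ 0) :
    ∫ n, (n + 1 : ℝ) ∂geometricMeasure p = 1 / p := by
  rw [integral_geometricMeasure hp]
  exact (hasSum_succ_mul_geometricMeasure hp).tsum_eq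

theorem mgf_geometricMeasure (hp : p ≠ 0) {t : ℝ} (ht : (1 - p) * exp t < 1) :
    mgf (fun n : ℕ ↦ (n : ℝ)) (geometricMeasure p) t = p / (1 - (1 - p) * exp t) := by
  have hq : 0 ≤ (1 - p : ℝ) * exp t := mul_nonneg (by linarith [p.2.2]) (exp_pos t).le
  rw [mgf, integral_geometricMeasure hp, div_eq_mul_inv, ← tsum_geometric_of_lt_one hq ht,
    ← tsum_mul_left]
  refine tsum_congr fun n ↦ ?_
  rw [smul_eq_mul, mul_pow, ← exp_nat_mul]
  ring_nf

theorem mgf_succ_geometricMeasure_neg_le (hp : p ≠ 0) {t : ℝ} (ht : 0 ≤ t) :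
    mgf (fun n : ℕ ↦ (n + 1 : ℝ)) (geometricMeasure p) (-t) ≤
      exp (-t * (1 / p) + t ^ 2 * (1 / p ^ 2) / 2) := by
  have hp0 : (0 : ℝ) < p := unitInterval.pos_iff_ne_zero.mpr hp
  have hlt : (1 - p) * exp (-t) < 1 :=
    (mul_le_of_le_one_right (sub_nonneg.mpr p.2.2) (exp_le_one_iff.mpr (by linarith))).trans_lt
      (by linarith)
  have hden : 1 - (1 - p) * exp (-t) = (exp t - 1 + p) * exp (-t) := by
    rw [exp_neg]; field_simp; ring
  rw [mgf_add_const, mgf_geometricMeasure hp hlt, mul_one, hden, div_mul_eq_div_div,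
    div_mul_cancel₀ _ (exp_pos _).ne']
  exact div_exp_sub_one_add_le hp0 ht

theorem identDistrib_add_one_geometricMeasure {Ω : Type*} [MeasurableSpace Ω] {μ : Measure Ω}
    [IsProbabilityMeasure μ] {Y : Ω → ℕ} (hY : Measurable Y) (hp : p ≠ 0)
    (hlaw : ∀ j, 1 ≤ j → μ {ω | Y ω = j} = ENNReal.ofReal ((1 - p) ^ (j - 1) * p)) :
    IdentDistrib Y (· + 1) μ (geometricMeasure p) := by
  refine ⟨hY.aemeasurable, (measurable_add_const 1).aemeasurable, ?_⟩
  have := Measure.isProbabilityMeasure_map (μ := μ) hY.aemeasurable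
  have := Measure.isProbabilityMeasure_map (μ := geometricMeasure p)
    (measurable_add_const 1).aemeasurable
  -- `hlaw` says nothing about `{Y = 0}`: domination of one probability measure by another suffices.
  refine (Measure.eq_of_le_of_isProbabilityMeasure (Measure.le_of_forall_singleton_le ?_)).symm
  intro j
  rw [Measure.map_apply (measurable_add_const 1) (measurableSet_singleton j),
    Measure.map_apply hY (measurableSet_singleton j)]
  rcases j with _ | k
  · rw [show (· + 1) ⁻¹' {0} = (∅ : Set ℕ) by ext; simp, measure_empty]
    exact zero_le
  · rw [show (· + 1) ⁻¹' {k + 1} = {k} by ext; simp, geometricMeasure_singleton hp]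
    exact (hlaw (k + 1) (Nat.le_add_left 1 k)).ge

end Geometric

theorem iIndepFun.measureReal_sum_le_sub_le {ι Ω : Type*} [MeasurableSpace Ω] {μ : Measure Ω}
    {Y : ι → Ω → ℝ} (hindep : iIndepFun Y μ) (hmeas : ∀ i, Measurable (Y i)) (s : Finset ι)
    {m v : ι → ℝ} {t : ℝ} (ht : 0 ≤ t) (δ : ℝ)
    (hint : ∀ i ∈ s, Integrable (fun ω ↦ exp (-t * Y i ω)) μ)
    (hmgf : ∀ i ∈ s, mgf (Y i) μ (-t) ≤ exp (-t * m i + t ^ 2 * v i / 2)) :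
    μ.real {ω | ∑ i ∈ s, Y i ω ≤ ∑ i ∈ s, m i - δ} ≤
      exp (-t * δ + t ^ 2 * (∑ i ∈ s, v i) / 2) := by
  have := hindep.isProbabilityMeasure
  have hchernoff := measure_le_le_exp_mul_mgf (X := ∑ i ∈ s, Y i) (∑ i ∈ s, m i - δ)
    (neg_nonpos.mpr ht) (hindep.integrable_exp_mul_sum hmeas hint)
  simp only [hindep.mgf_sum hmeas s, Finset.sum_apply] at hchernoff
  calc _ ≤ exp (- -t * (∑ i ∈ s, m i - δ)) * ∏ i ∈ s, exp (-t * m i + t ^ 2 * v i / 2) := by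
        refine hchernoff.trans ?_
        gcongr with i hi
        exacts [fun i _ ↦ mgf_nonneg, hmgf i hi]
    _ = exp (-t * δ + t ^ 2 * (∑ i ∈ s, v i) / 2) := by
        rw [← exp_sum, ← exp_add, Finset.sum_add_distrib, ← Finset.mul_sum, ← Finset.sum_div,
          ← Finset.mul_sum]
        ring_nf

end ProbabilityTheory

theorem geometric_sum_lower_tail_param_general
    {Ω : Type*} [MeasurableSpace Ω] (μ : Measure Ω) [IsProbabilityMeasure μ]
    (n : ℕ) (X : Fin n → Ω → ℕ) (p : Fin n → ℝ)
    (hp0 : ∀ i, 0 < p i) (hp1 : ∀ i, p i ≤ 1)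
    (hmeas : ∀ i, Measurable (X i))
    (hgeom : ∀ i, ∀ j : ℕ, 1 ≤ j →
      μ {ω | X i ω = j} = ENNReal.ofReal ((1 - p i) ^ (j - 1) * p i))
    (hindep : iIndepFun X μ)
    (s : ℝ) (hs : ∑ i, 1 / (p i) ^ 2 ≤ s)
    (δ : ℝ) (t : ℝ) (ht : 0 ≤ t) :
    μ {ω | (∑ i, (X i ω : ℝ)) < (∫ ω, ∑ i, (X i ω : ℝ) ∂μ) - δ}
      ≤ ENNReal.ofReal (Real.exp (-t * δ + t ^ 2 * s / 2)) := by
  let q : Fin n → unitInterval := fun i ↦ ⟨p i, (hp0 i).le, hp1 i⟩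
  have hq : ∀ i, q i ≠ 0 := fun i h ↦ (hp0 i).ne' (congrArg Subtype.val h)
  have hlaw : ∀ i, IdentDistrib (fun ω ↦ (X i ω : ℝ)) (fun k : ℕ ↦ (k + 1 : ℝ)) μ
      (geometricMeasure (q i)) := fun i ↦ by
    simpa [Function.comp_def] using
      (identDistrib_add_one_geometricMeasure (hmeas i) (hq i) (hgeom i)).comp
        (measurable_from_top (f := Nat.cast (R := ℝ)))
  have hmean : ∫ ω, ∑ i, (X i ω : ℝ) ∂μ = ∑ i, 1 / p i := by
    rw [integral_finsetSum _ fun i _ ↦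
      (hlaw i).integrable_iff.mpr (integrable_succ_geometricMeasure (hq i))]
    exact Finset.sum_congr rfl fun i _ ↦
      (hlaw i).integral_eq.trans (integral_succ_geometricMeasure (hq i))
  have hint : ∀ i, Integrable (fun ω ↦ exp (-t * (X i ω : ℝ))) μ := fun i ↦
    Integrable.of_bound (by fun_prop) 1 (ae_of_all _ fun ω ↦ by
      rw [norm_of_nonneg (exp_pos _).le, exp_le_one_iff]
      exact mul_nonpos_of_nonpos_of_nonneg (neg_nonpos.mpr ht) (Nat.cast_nonneg _))
  have htail := (hindep.comp (fun _ (k : ℕ) ↦ (k : ℝ)) fun _ ↦ measurable_from_top)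
    |>.measureReal_sum_le_sub_le (fun i ↦ measurable_from_top.comp (hmeas i)) Finset.univ ht δ
      (fun i _ ↦ hint i) fun i _ ↦
        (mgf_congr_identDistrib (hlaw i) ▸ mgf_succ_geometricMeasure_neg_le (hq i) ht)
  rw [hmean]
  calc μ {ω | ∑ i, (X i ω : ℝ) < ∑ i, 1 / p i - δ}
      ≤ μ {ω | ∑ i, (X i ω : ℝ) ≤ ∑ i, 1 / p i - δ} :=
        measure_mono <| Set.ofPred_subset_ofPred.mpr fun _ ↦ le_of_lt
    _ ≤ ENNReal.ofReal (exp (-t * δ + t ^ 2 * (∑ i, 1 / p i ^ 2) / 2)) := by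
        rw [← ofReal_measureReal]
        exact ENNReal.ofReal_le_ofReal htail
    _ ≤ ENNReal.ofReal (exp (-t * δ + t ^ 2 * s / 2)) := by gcongr

theorem geometric_sum_lower_tail_param
    {Ω : Type*} [MeasurableSpace Ω] (μ : Measure Ω) [IsProbabilityMeasure μ]
    (n : ℕ) (X : Fin n → Ω → ℕ) (p : Fin n → ℝ)
    (hp0 : ∀ i, 0 < p i) (hp1 : ∀ i, p i ≤ 1)
    (hmeas : ∀ i, Measurable (X i))
    (hgeom : ∀ i, ∀ j : ℕ, 1 ≤ j →
      μ {ω | X i ω = j} = ENNReal.ofReal ((1 - p i) ^ (j - 1) * p i))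
    (hindep : iIndepFun X μ)
    (s : ℝ) (hs : ∑ i, 1 / (p i) ^ 2 ≤ s)
    (δ : ℝ) (hδ : 0 < δ) (t : ℝ) (ht : 0 ≤ t) :
    μ {ω | (∑ i, (X i ω : ℝ)) < (∫ ω, ∑ i, (X i ω : ℝ) ∂μ) - δ}
      ≤ ENNReal.ofReal (Real.exp (-t * δ + t ^ 2 * s / 2)) :=
  geometric_sum_lower_tail_param_general μ n X p hp0 hp1 hmeas hgeom hindep s hs δ t ht
end

section
/- Let X₁, …, Xₙ be independent random variables where Xᵢ is geometrically distributed on {1, 2, 3, …} with success probability pᵢ ∈ (0, 1], let X := X₁ + ⋯ + Xₙ, let s be a finite real number with ∑_{i=1}^n 1/pᵢ² ≤ s, and let h := min{pᵢ : i = 1, …, n}. Then for every δ > 0 and every t with 0 ≤ t ≤ h/2, P(X > E[X] + δ) ≤ exp(−tδ + t²s). -/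
/-!
Each `Xᵢ` has the law of `1 + Geom(pᵢ)`, whose moment generating function is
`eᵗ p / (1 - (1 - p) eᵗ) = 1 / (1 - u)` with `u = (1 - e⁻ᵗ) / p ≤ t / p ≤ 1 / 2`. The logarithmic
series gives `-log (1 - u) ≤ u + u²`, hence `E[e^{t Xᵢ}] ≤ exp (t / pᵢ + t² / pᵢ²)`. By independence
these bounds multiply, and Chernoff's inequality at `E[X] + δ = ∑ 1 / pᵢ + δ` gives the tail bound.
-/

open MeasureTheory ProbabilityTheory Real

lemma Real.neg_log_one_sub_le {u : ℝ} (h0 : 0 ≤ u) (h1 : u < 1) :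
    -log (1 - u) ≤ u + u ^ 2 / (2 * (1 - u)) := by
  -- compare `∑ₙ u ^ (n + 2) / (n + 2)`, the series of `-log (1 - u) - u`, with `∑ₙ u ^ (n + 2) / 2`
  have htail := (hasSum_nat_add_iff' 1).mpr
    (hasSum_pow_div_log_of_abs_lt_one (by rwa [abs_of_nonneg h0]))
  have hgeom := (hasSum_geometric_of_lt_one h0 h1).mul_left (u ^ 2 / 2)
  have hle := hasSum_le (fun n => ?_) htail hgeom
  · have hsum : u ^ 2 / 2 * (1 - u)⁻¹ = u ^ 2 / (2 * (1 - u)) := by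
      field_simp [(sub_pos.mpr h1).ne']
    norm_num at hle
    linarith
  · push_cast
    rw [div_le_iff₀ (by positivity)]
    have hn : (2 : ℝ) ≤ n + 1 + 1 := by norm_cast; omega
    calc u ^ (n + 1 + 1) = u ^ 2 / 2 * u ^ n * 2 := by ring
      _ ≤ u ^ 2 / 2 * u ^ n * (n + 1 + 1) := by gcongr

lemma one_sub_mul_exp_lt_one_and_exp_mul_div_le {p t : ℝ} (hp : 0 < p) (ht0 : 0 ≤ t)
    (ht : t ≤ p / 2) :
    (1 - p) * exp t < 1 ∧ exp t * (p / (1 - (1 - p) * exp t)) ≤ exp (t / p + t ^ 2 / p ^ 2) := by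
  set u := (1 - exp (-t)) / p with hu
  have hu0 : 0 ≤ u := div_nonneg (by simpa using ht0) hp.le
  have hut : u ≤ t / p := by
    apply div_le_div_of_nonneg_right _ hp.le
    linarith [add_one_le_exp (-t)]
  have hu_half : u ≤ 1 / 2 := hut.trans (by rw [div_le_iff₀ hp]; linarith)
  have hden : 1 - (1 - p) * exp t = exp t * p * (1 - u) := by
    have he : exp t * exp (-t) = 1 := by rw [← exp_add, add_neg_cancel, exp_zero]
    rw [hu]
    field_simp
    linear_combination (-1 : ℝ) * he
  have hpos : 0 < exp t * p * (1 - u) := mul_pos (mul_pos (exp_pos t) hp) (by linarith)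
  refine ⟨by linarith, ?_⟩
  calc exp t * (p / (1 - (1 - p) * exp t)) = exp (-log (1 - u)) := by
        rw [hden, exp_neg, exp_log (by linarith)]
        field_simp
    _ ≤ exp (u + u ^ 2) := by
        gcongr
        refine (neg_log_one_sub_le hu0 (by linarith)).trans ?_
        gcongr
        rw [div_le_iff₀ (by linarith)]
        nlinarith
    _ ≤ exp (t / p + t ^ 2 / p ^ 2) := by
        rw [← div_pow]
        gcongr

theorem MeasureTheory.Measure.ext_of_singleton_of_ne {α : Type*} [MeasurableSpace α]
    [MeasurableSingletonClass α] [Countable α] {μ ν : Measure α}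
    [IsProbabilityMeasure μ] [IsProbabilityMeasure ν] (a₀ : α)
    (h : ∀ a ≠ a₀, μ {a} = ν {a}) : μ = ν := by
  have hrestrict : μ.restrict {a₀}ᶜ = ν.restrict {a₀}ᶜ := by
    refine Measure.ext_of_singleton fun a => ?_
    rw [Measure.restrict_apply (measurableSet_singleton a),
      Measure.restrict_apply (measurableSet_singleton a)]
    by_cases ha : a = a₀
    · simp [ha]
    · rw [Set.inter_eq_left.mpr (by simpa using Ne.symm ha), h a ha]
  refine Measure.ext_of_singleton fun a => ?_
  by_cases ha : a = a₀
  · subst ha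
    have hcompl := congrArg (fun m : Measure α => m Set.univ) hrestrict
    simp only [Measure.restrict_apply_univ] at hcompl
    rw [prob_compl_eq_one_sub (measurableSet_singleton a),
      prob_compl_eq_one_sub (measurableSet_singleton a)] at hcompl
    exact (ENNReal.sub_right_inj ENNReal.one_ne_top prob_le_one prob_le_one).mp hcompl
  · exact h a ha

namespace ProbabilityTheory

variable {p : unitInterval}

lemma integrable_natCast_geometricMeasure (hp : p ≠ 0) :
    Integrable (fun n : ℕ => (n : ℝ)) (geometricMeasure p) := by
  have hp0 : (0 : ℝ) < p := unitInterval.pos_iff_ne_zero.mpr hp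
  have hq : ‖(1 - p : ℝ)‖ < 1 := by
    rw [Real.norm_of_nonneg (by linarith [p.2.2])]
    linarith
  rw [integrable_geometricMeasure_iff hp]
  refine ((hasSum_coe_mul_geometric_of_norm_lt_one hq).summable.mul_right (p : ℝ)).congr
    fun n => ?_
  simp only [Real.norm_natCast]
  ring

lemma integral_natCast_geometricMeasure (hp : p ≠ 0) :
    ∫ n, (n : ℝ) ∂geometricMeasure p = (1 - p) / p := by
  have hp0 : (0 : ℝ) < p := unitInterval.pos_iff_ne_zero.mpr hp
  have hq : ‖(1 - p : ℝ)‖ < 1 := by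
    rw [Real.norm_of_nonneg (by linarith [p.2.2])]
    linarith
  rw [integral_geometricMeasure hp]
  simp only [smul_eq_mul]
  rw [show (fun n : ℕ => (1 - p : ℝ) ^ n * p * n) = fun n : ℕ => (n * (1 - p : ℝ) ^ n) * p by
    ext; ring, tsum_mul_right, tsum_coe_mul_geometric_of_norm_lt_one hq]
  field_simp [hp0.ne']
  ring

lemma integrable_exp_mul_natCast_geometricMeasure (hp : p ≠ 0) {t : ℝ}
    (ht : (1 - p) * exp t < 1) :
    Integrable (fun n : ℕ => exp (t * n)) (geometricMeasure p) := by
  rw [integrable_geometricMeasure_iff hp]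
  have hq : 0 ≤ (1 - p : ℝ) * exp t := mul_nonneg (by linarith [p.2.2]) (exp_pos t).le
  refine ((summable_geometric_of_lt_one hq ht).mul_right (p : ℝ)).congr fun n => ?_
  rw [Real.norm_of_nonneg (exp_pos _).le, mul_comm t, exp_nat_mul, mul_pow]
  ring

lemma mgf_natCast_geometricMeasure (hp : p ≠ 0) {t : ℝ} (ht : (1 - p) * exp t < 1) :
    mgf (fun n : ℕ => (n : ℝ)) (geometricMeasure p) t = p / (1 - (1 - p) * exp t) := by
  have hq : 0 ≤ (1 - p : ℝ) * exp t := mul_nonneg (by linarith [p.2.2]) (exp_pos t).le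
  rw [mgf, integral_geometricMeasure hp]
  simp only [smul_eq_mul]
  rw [show (fun n : ℕ => (1 - p : ℝ) ^ n * p * exp (t * n)) =
      fun n : ℕ => ((1 - p : ℝ) * exp t) ^ n * p by
      ext n; rw [mul_comm t, exp_nat_mul, mul_pow]; ring,
    tsum_mul_right, tsum_geometric_of_lt_one hq ht]
  ring

lemma identDistrib_succ_geometricMeasure {Ω : Type*} [MeasurableSpace Ω] {μ : Measure Ω}
    [IsProbabilityMeasure μ] {Y : Ω → ℕ} (hY : Measurable Y) (hp : p ≠ 0)
    (hlaw : ∀ j : ℕ, μ {ω | Y ω = j + 1} = ENNReal.ofReal ((1 - p) ^ j * p)) :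
    IdentDistrib Y (· + 1) μ (geometricMeasure p) where
  aemeasurable_fst := hY.aemeasurable
  aemeasurable_snd := measurable_of_countable _ |>.aemeasurable
  map_eq := by
    have := Measure.isProbabilityMeasure_map (μ := μ) hY.aemeasurable
    have := Measure.isProbabilityMeasure_map (μ := geometricMeasure p)
      (measurable_of_countable (· + 1)).aemeasurable
    refine Measure.ext_of_singleton_of_ne 0 fun a ha => ?_
    obtain ⟨j, rfl⟩ := Nat.exists_eq_succ_of_ne_zero ha
    rw [Measure.map_apply hY (measurableSet_singleton _),
      Measure.map_apply (measurable_of_countable _) (measurableSet_singleton _)]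
    have hsucc : (· + 1) ⁻¹' {j + 1} = ({j} : Set ℕ) := by ext; simp
    rw [hsucc, geometricMeasure_singleton hp, ← hlaw j]
    rfl

section ShiftedGeometric

variable {Ω : Type*} [MeasurableSpace Ω] {μ : Measure Ω} {Y : Ω → ℝ}

lemma IdentDistrib.integrable_of_geometricMeasure
    (hY : IdentDistrib Y (fun n : ℕ => (n : ℝ) + 1) μ (geometricMeasure p)) (hp : p ≠ 0) :
    Integrable Y μ :=
  hY.integrable_iff.mpr ((integrable_natCast_geometricMeasure hp).add (integrable_const 1))

lemma IdentDistrib.integral_eq_inv_of_geometricMeasure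
    (hY : IdentDistrib Y (fun n : ℕ => (n : ℝ) + 1) μ (geometricMeasure p)) (hp : p ≠ 0) :
    ∫ ω, Y ω ∂μ = 1 / p := by
  have hp0 : (0 : ℝ) < p := unitInterval.pos_iff_ne_zero.mpr hp
  rw [hY.integral_eq, integral_add (integrable_natCast_geometricMeasure hp) (integrable_const 1),
    integral_natCast_geometricMeasure hp]
  field_simp
  simp

lemma IdentDistrib.integrable_exp_mul_of_geometricMeasure
    (hY : IdentDistrib Y (fun n : ℕ => (n : ℝ) + 1) μ (geometricMeasure p)) (hp : p ≠ 0)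
    {t : ℝ} (ht0 : 0 ≤ t) (ht : t ≤ p / 2) :
    Integrable (fun ω => exp (t * Y ω)) μ := by
  have hlt := (one_sub_mul_exp_lt_one_and_exp_mul_div_le
    (unitInterval.pos_iff_ne_zero.mpr hp) ht0 ht).1
  refine (hY.comp (u := fun x => exp (t * x)) (by fun_prop)).integrable_iff.mpr
    (((integrable_exp_mul_natCast_geometricMeasure hp hlt).const_mul (exp t)).congr
      (ae_of_all _ fun n => ?_))
  simp only [Function.comp_apply, ← exp_add]
  ring_nf

lemma IdentDistrib.mgf_le_of_geometricMeasure
    (hY : IdentDistrib Y (fun n : ℕ => (n : ℝ) + 1) μ (geometricMeasure p)) (hp : p ≠ 0)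
    {t : ℝ} (ht0 : 0 ≤ t) (ht : t ≤ p / 2) :
    mgf Y μ t ≤ exp (t / p + t ^ 2 / p ^ 2) := by
  obtain ⟨hlt, hle⟩ :=
    one_sub_mul_exp_lt_one_and_exp_mul_div_le (unitInterval.pos_iff_ne_zero.mpr hp) ht0 ht
  rw [mgf_congr_identDistrib hY, mgf_add_const, mgf_natCast_geometricMeasure hp hlt, mul_one,
    mul_comm]
  exact hle

end ShiftedGeometric

lemma measure_sum_ge_le_of_iIndepFun {ι Ω : Type*} [MeasurableSpace Ω] {μ : Measure Ω}
    {Y : ι → Ω → ℝ} (hindep : iIndepFun Y μ) (hmeas : ∀ i, Measurable (Y i))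
    (s : Finset ι) {t : ℝ} (ht : 0 ≤ t) {m v : ι → ℝ}
    (hint : ∀ i ∈ s, Integrable (fun ω => exp (t * Y i ω)) μ)
    (hmgf : ∀ i ∈ s, mgf (Y i) μ t ≤ exp (t * m i + t ^ 2 * v i)) (δ : ℝ) :
    μ.real {ω | ∑ i ∈ s, m i + δ ≤ ∑ i ∈ s, Y i ω} ≤ exp (-t * δ + t ^ 2 * ∑ i ∈ s, v i) := by
  have := hindep.isProbabilityMeasure
  calc μ.real {ω | ∑ i ∈ s, m i + δ ≤ ∑ i ∈ s, Y i ω}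
      = μ.real {ω | ∑ i ∈ s, m i + δ ≤ (∑ i ∈ s, Y i) ω} := by simp only [Finset.sum_apply]
    _ ≤ exp (-t * (∑ i ∈ s, m i + δ)) * mgf (∑ i ∈ s, Y i) μ t :=
        measure_ge_le_exp_mul_mgf _ ht (hindep.integrable_exp_mul_sum hmeas hint)
    _ = exp (-t * (∑ i ∈ s, m i + δ)) * ∏ i ∈ s, mgf (Y i) μ t := by
        rw [hindep.mgf_sum hmeas]
    _ ≤ exp (-t * (∑ i ∈ s, m i + δ)) * ∏ i ∈ s, exp (t * m i + t ^ 2 * v i) := by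
        gcongr with i hi
        exacts [fun i _ => mgf_nonneg, hmgf i hi]
    _ = exp (-t * δ + t ^ 2 * ∑ i ∈ s, v i) := by
        rw [← exp_sum, ← exp_add, Finset.sum_add_distrib, ← Finset.mul_sum, ← Finset.mul_sum]
        ring_nf

end ProbabilityTheory

theorem geometric_sum_upper_tail_param_general
    {Ω : Type*} [MeasurableSpace Ω] (μ : Measure Ω) [IsProbabilityMeasure μ]
    (n : ℕ) (X : Fin n → Ω → ℕ) (p : Fin n → ℝ)
    (hp0 : ∀ i, 0 < p i) (hp1 : ∀ i, p i ≤ 1)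
    (hmeas : ∀ i, Measurable (X i))
    (hgeom : ∀ i, ∀ j : ℕ, 1 ≤ j →
      μ {ω | X i ω = j} = ENNReal.ofReal ((1 - p i) ^ (j - 1) * p i))
    (hindep : iIndepFun X μ)
    (s : ℝ) (hs : ∑ i, 1 / (p i) ^ 2 ≤ s)
    (h : ℝ) (hmin : IsLeast (Set.range p) h)
    (δ : ℝ) (t : ℝ) (ht0 : 0 ≤ t) (ht1 : t ≤ h / 2) :
    μ {ω | (∑ i, (X i ω : ℝ)) > (∫ ω, ∑ i, (X i ω : ℝ) ∂μ) + δ}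
      ≤ ENNReal.ofReal (Real.exp (-t * δ + t ^ 2 * s)) := by
  let q : Fin n → unitInterval := fun i => ⟨p i, (hp0 i).le, hp1 i⟩
  have hq : ∀ i, q i ≠ 0 := fun i => unitInterval.coe_ne_zero.mp (hp0 i).ne'
  have hlaw : ∀ i, IdentDistrib (fun ω => (X i ω : ℝ)) (fun k : ℕ => (k : ℝ) + 1) μ
      (geometricMeasure (q i)) := fun i => by
    simpa [Function.comp_def] using (identDistrib_succ_geometricMeasure (hmeas i) (hq i)
      fun j => hgeom i (j + 1) (by omega)).comp (u := fun k : ℕ => (k : ℝ)) (by fun_prop)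
  have ht : ∀ i, t ≤ q i / 2 := fun i => ht1.trans (by linarith [hmin.2 ⟨i, rfl⟩])
  have hmean : ∫ ω, ∑ i, (X i ω : ℝ) ∂μ = ∑ i, 1 / p i := by
    rw [integral_finsetSum _ fun i _ => (hlaw i).integrable_of_geometricMeasure (hq i)]
    exact Finset.sum_congr rfl fun i _ => (hlaw i).integral_eq_inv_of_geometricMeasure (hq i)
  have hchernoff := measure_sum_ge_le_of_iIndepFun (Y := fun i ω => (X i ω : ℝ))
    (hindep.comp (fun _ k => (k : ℝ)) fun _ => by fun_prop) (fun i => by fun_prop) Finset.univ ht0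
    (fun i _ => (hlaw i).integrable_exp_mul_of_geometricMeasure (hq i) ht0 (ht i))
    (m := fun i => 1 / p i) (v := fun i => 1 / p i ^ 2)
    (fun i _ => by
      rw [mul_one_div, mul_one_div]
      exact (hlaw i).mgf_le_of_geometricMeasure (hq i) ht0 (ht i)) δ
  rw [hmean]
  calc μ {ω | ∑ i, (X i ω : ℝ) > ∑ i, 1 / p i + δ}
      ≤ μ {ω | ∑ i, 1 / p i + δ ≤ ∑ i, (X i ω : ℝ)} :=
        measure_mono (Set.ofPred_subset_ofPred.mpr fun _ hω => hω.le)
    _ = ENNReal.ofReal (μ.real {ω | ∑ i, 1 / p i + δ ≤ ∑ i, (X i ω : ℝ)}) :=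
        (ENNReal.ofReal_toReal (measure_ne_top μ _)).symm
    _ ≤ ENNReal.ofReal (Real.exp (-t * δ + t ^ 2 * s)) := by
        gcongr
        exact hchernoff.trans (by gcongr)

theorem geometric_sum_upper_tail_param
    {Ω : Type*} [MeasurableSpace Ω] (μ : Measure Ω) [IsProbabilityMeasure μ]
    (n : ℕ) (X : Fin n → Ω → ℕ) (p : Fin n → ℝ)
    (hp0 : ∀ i, 0 < p i) (hp1 : ∀ i, p i ≤ 1)
    (hmeas : ∀ i, Measurable (X i))
    (hgeom : ∀ i, ∀ j : ℕ, 1 ≤ j →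
      μ {ω | X i ω = j} = ENNReal.ofReal ((1 - p i) ^ (j - 1) * p i))
    (hindep : iIndepFun X μ)
    (s : ℝ) (hs : ∑ i, 1 / (p i) ^ 2 ≤ s)
    (h : ℝ) (hmin : IsLeast (Set.range p) h)
    (δ : ℝ) (hδ : 0 < δ) (t : ℝ) (ht0 : 0 ≤ t) (ht1 : t ≤ h / 2) :
    μ {ω | (∑ i, (X i ω : ℝ)) > (∫ ω, ∑ i, (X i ω : ℝ) ∂μ) + δ}
      ≤ ENNReal.ofReal (Real.exp (-t * δ + t ^ 2 * s)) :=
  geometric_sum_upper_tail_param_general μ n X p hp0 hp1 hmeas hgeom hindep s hs h hmin δ t ht0 ht1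
end
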